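/- arXiv:2102.09827 — 3 statements merged into one kernel-verified Lean document; each statement's English description precedes it below -/
import Mathlib

section
/- For any real numbers a₁,…,a_k, b with b·∏ᵢaᵢ ≠ 0, any real numbers α₁,β₁,…,α_k,β_k,α_{k+1},…,α_n, δ with not all αᵢ, βᵢ zero, there exist real numbers s and t₁,…,t_{n-1} such that ∑_{i=1}^k tᵢ(αᵢ cos(aᵢ s) + βᵢ sin(aᵢ s)) + ∑_{j=k+1}^{n-1} αⱼ tⱼ + α_n b s = δ. Consequently, the generalized helicoid M^n(a₁,…,a_k,b) intersects every affine hyperplane of ℝ^{n+k}. -/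
/-!
For fixed `s` the left-hand side is affine in `(t, u)`, hence takes every value as soon as one
of its linear coefficients is nonzero. This holds for every `s` when `γ ≠ 0`, and at `s = 0` or
`s = π / (2 aᵢ)` when `(αᵢ, βᵢ) ≠ 0`. If all of them vanish then `αn ≠ 0`, and `s` alone solves
`αn b s = δ`.
-/

open Real

theorem exists_sum_mul_eq_of_ne_zero {ι 𝕜 : Type*} [Fintype ι] [Field 𝕜] {c : ι → 𝕜}
    (hc : c ≠ 0) (δ : 𝕜) : ∃ x : ι → 𝕜, ∑ j, c j * x j = δ := by
  classical
  obtain ⟨i, hi⟩ := Function.ne_iff.mp hc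
  refine ⟨Pi.single i (δ / c i), ?_⟩
  simp [Pi.single_apply, mul_div_cancel₀ _ hi]

theorem exists_mul_cos_add_mul_sin_ne_zero {a α β : ℝ} (ha : a ≠ 0) (h : α ≠ 0 ∨ β ≠ 0) :
    ∃ s, α * cos (a * s) + β * sin (a * s) ≠ 0 := by
  rcases h with hα | hβ
  · exact ⟨0, by simpa using hα⟩
  · refine ⟨π / (2 * a), ?_⟩
    have hs : a * (π / (2 * a)) = π / 2 := by field_simp
    simpa [hs] using hβ

/-- Lemma 2 of the paper: if `b * ∏ aᵢ ≠ 0`, then for any hyperplane coefficients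
`α, β, γ, αn` (not all zero) and any `δ`, there is a point of the generalized
helicoid on the hyperplane, i.e. the helicoid equation
`∑ tᵢ(αᵢ cos(aᵢ s) + βᵢ sin(aᵢ s)) + ∑ γⱼ uⱼ + αn · b s = δ` is solvable. -/
theorem helicoid_meets_every_hyperplane (k m : ℕ) (a : Fin k → ℝ) (b : ℝ)
    (hb : b * ∏ i, a i ≠ 0)
    (α β : Fin k → ℝ) (γ : Fin m → ℝ) (αn : ℝ) (δ : ℝ)
    (hcoef : ¬(α = 0 ∧ β = 0 ∧ γ = 0 ∧ αn = 0)) :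
    ∃ (s : ℝ) (t : Fin k → ℝ) (u : Fin m → ℝ),
      (∑ i, t i * (α i * Real.cos (a i * s) + β i * Real.sin (a i * s))) +
        (∑ j, γ j * u j) + αn * (b * s) = δ := by
  obtain ⟨hb, ha⟩ : b ≠ 0 ∧ ∀ i, a i ≠ 0 := by simpa [Finset.prod_ne_zero_iff] using hb
  obtain hαn | hαn := ne_or_eq αn 0
  · exact ⟨δ / (αn * b), 0, 0, by simp [field]⟩
  obtain hγ | hγ := ne_or_eq γ 0
  · obtain ⟨u, hu⟩ := exists_sum_mul_eq_of_ne_zero hγ δ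
    exact ⟨0, 0, u, by simp [hu, hαn]⟩
  obtain ⟨i, hi⟩ : ∃ i, α i ≠ 0 ∨ β i ≠ 0 := by
    by_contra! h
    exact hcoef ⟨funext fun i => (h i).1, funext fun i => (h i).2, hγ, hαn⟩
  obtain ⟨s, hs⟩ := exists_mul_cos_add_mul_sin_ne_zero (ha i) hi
  obtain ⟨t, ht⟩ := exists_sum_mul_eq_of_ne_zero
    (c := fun i => α i * cos (a i * s) + β i * sin (a i * s)) (Function.ne_iff.mpr ⟨i, hs⟩) δ
  exact ⟨s, t, 0, by simpa [hαn, hγ, mul_comm] using ht⟩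
end

section
/- A generalized helicoid M^n(a₁,…,a_k,b) ⊂ ℝ^{n+k} that is contained in an open half-space of ℝ^{n+k} must satisfy b·∏_{i=1}^k aᵢ = 0. -/
open Real

/-- The generalized helicoid `M^n(a₁,…,a_k,b) ⊂ ℝ^{n+k}`: the image of
`(s,t₁,…,t_{n-1}) ↦ (t₁cos(a₁s), t₁sin(a₁s), …, t_k cos(a_k s), t_k sin(a_k s),
t_{k+1},…,t_{n-1}, bs)`, with the ambient Euclidean space `ℝ^{n+k}` coordinatized by
the index type `(Fin k ⊕ Fin k) ⊕ (Fin (n-1-k) ⊕ Unit)`. -/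
def generalizedHelicoid (n k : ℕ) (a : Fin k → ℝ) (b : ℝ) :
    Set (EuclideanSpace ℝ ((Fin k ⊕ Fin k) ⊕ (Fin (n - 1 - k) ⊕ Unit))) :=
  {x | ∃ (s : ℝ) (t : Fin k → ℝ) (u : Fin (n - 1 - k) → ℝ),
    (∀ i, x (Sum.inl (Sum.inl i)) = t i * Real.cos (a i * s)) ∧
    (∀ i, x (Sum.inl (Sum.inr i)) = t i * Real.sin (a i * s)) ∧
    (∀ j, x (Sum.inr (Sum.inl j)) = u j) ∧
    x (Sum.inr (Sum.inr ())) = b * s}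

/-!
When `b ≠ 0` and every `aᵢ ≠ 0`, the helicoid contains lines whose directions span the ambient
space: the coordinate lines in the free coordinates, the axis `s ↦ (0, …, 0, b s)`, and for each
`i` the rulings in the directions `(cos (aᵢ s), sin (aᵢ s))` at `s = 0` and at `aᵢ s = π / 2`.
As `v ≠ 0`, one of these lines is not parallel to the hyperplane `⟨x, v⟩ = c`, so it meets it.
-/

lemma exists_mem_inner_eq_of_affine_curve {E : Type*} [NormedAddCommGroup E]
    [InnerProductSpace ℝ E] {S : Set E} {v : E} (γ : ℝ → E) (hγ : ∀ τ, γ τ ∈ S) {α β : ℝ}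
    (hβ : β ≠ 0) (hγv : ∀ τ, inner ℝ (γ τ) v = α + τ * β) (r : ℝ) :
    ∃ x ∈ S, inner ℝ x v = r :=
  ⟨γ ((r - α) / β), hγ _, by rw [hγv, div_mul_cancel₀ _ hβ]; ring⟩

namespace GeneralizedHelicoid

variable {n k : ℕ} (a : Fin k → ℝ) (b : ℝ)

noncomputable def point (s : ℝ) (t : Fin k → ℝ) (u : Fin (n - 1 - k) → ℝ) :
    EuclideanSpace ℝ ((Fin k ⊕ Fin k) ⊕ (Fin (n - 1 - k) ⊕ Unit)) :=
  WithLp.toLp 2 fun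
  | .inl (.inl i) => t i * cos (a i * s)
  | .inl (.inr i) => t i * sin (a i * s)
  | .inr (.inl j) => u j
  | .inr (.inr _) => b * s

lemma point_mem (s : ℝ) (t : Fin k → ℝ) (u : Fin (n - 1 - k) → ℝ) :
    point a b s t u ∈ generalizedHelicoid n k a b :=
  ⟨s, t, u, fun _ => rfl, fun _ => rfl, fun _ => rfl, rfl⟩

lemma inner_point (s : ℝ) (t : Fin k → ℝ) (u : Fin (n - 1 - k) → ℝ)
    (v : EuclideanSpace ℝ ((Fin k ⊕ Fin k) ⊕ (Fin (n - 1 - k) ⊕ Unit))) :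
    inner ℝ (point a b s t u) v =
      ∑ i, t i * (cos (a i * s) * v (.inl (.inl i)) + sin (a i * s) * v (.inl (.inr i)))
        + ∑ j, u j * v (.inr (.inl j)) + b * s * v (.inr (.inr ())) := by
  simp only [PiLp.inner_apply, Fintype.sum_sum_type, point, RCLike.inner_apply, conj_trivial,
    Finset.univ_unique, Finset.sum_singleton]
  rw [← Finset.sum_add_distrib, add_assoc]
  congr 1
  · exact Finset.sum_congr rfl fun i _ => by ring
  · congr 1
    · exact Finset.sum_congr rfl fun j _ => mul_comm _ _
    · ring

lemma exists_mem_inner_eq (ha : ∀ i, a i ≠ 0) (hb : b ≠ 0)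
    {v : EuclideanSpace ℝ ((Fin k ⊕ Fin k) ⊕ (Fin (n - 1 - k) ⊕ Unit))} (hv : v ≠ 0) (r : ℝ) :
    ∃ x ∈ generalizedHelicoid n k a b, inner ℝ x v = r := by
  obtain ⟨idx, hidx⟩ : ∃ idx, v idx ≠ 0 := by
    by_contra! hall
    exact hv (PiLp.ext hall)
  rcases idx with (i | i) | (j | ⟨⟩)
  · refine exists_mem_inner_eq_of_affine_curve (fun τ => point a b 0 (Pi.single i τ) 0)
      (fun _ => point_mem ..) hidx (α := 0) (fun τ => ?_) r
    simp [inner_point, Pi.single_apply]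
  · have hs : a i * (π / 2 / a i) = π / 2 := mul_div_cancel₀ _ (ha i)
    refine exists_mem_inner_eq_of_affine_curve
      (fun τ => point a b (π / 2 / a i) (Pi.single i τ) 0) (fun _ => point_mem ..) hidx
      (α := b * (π / 2 / a i) * v (.inr (.inr ()))) (fun τ => ?_) r
    simp [inner_point, Pi.single_apply, hs]
    ring
  · refine exists_mem_inner_eq_of_affine_curve (fun τ => point a b 0 0 (Pi.single j τ))
      (fun _ => point_mem ..) hidx (α := 0) (fun τ => ?_) r
    simp [inner_point, Pi.single_apply]
  · refine exists_mem_inner_eq_of_affine_curve (fun τ => point a b τ 0 0)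
      (fun _ => point_mem ..) (mul_ne_zero hb hidx) (α := 0) (fun τ => ?_) r
    simp [inner_point]
    ring

end GeneralizedHelicoid

theorem helicoid_in_halfspace_general (n k : ℕ) (a : Fin k → ℝ) (b : ℝ)
    (v : EuclideanSpace ℝ ((Fin k ⊕ Fin k) ⊕ (Fin (n - 1 - k) ⊕ Unit))) (hv : v ≠ 0)
    (c : ℝ) (hsub : generalizedHelicoid n k a b ⊆ {x | (inner ℝ x v : ℝ) > c}) :
    b * ∏ i, a i = 0 := by
  by_contra h
  obtain ⟨hb, hprod⟩ := mul_ne_zero_iff.mp h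
  have ha : ∀ i, a i ≠ 0 := fun i => Finset.prod_ne_zero_iff.mp hprod i (Finset.mem_univ i)
  obtain ⟨x, hx, hxv⟩ := GeneralizedHelicoid.exists_mem_inner_eq a b ha hb hv c
  exact (hsub hx).ne' hxv

/-- A generalized helicoid contained in an open half-space `{x : ⟨x, v⟩ > c}`
(`v ≠ 0`) must satisfy `b · ∏ᵢ aᵢ = 0`. -/
theorem helicoid_in_halfspace (n k : ℕ) (hk : k ≤ n) (a : Fin k → ℝ) (b : ℝ)
    (v : EuclideanSpace ℝ ((Fin k ⊕ Fin k) ⊕ (Fin (n - 1 - k) ⊕ Unit))) (hv : v ≠ 0)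
    (c : ℝ) (hsub : generalizedHelicoid n k a b ⊆ {x | (inner ℝ x v : ℝ) > c}) :
    b * ∏ i, a i = 0 :=
  helicoid_in_halfspace_general n k a b v hv c hsub
end

section
/- Let E ⊂ ℝ^{2L-1} be a subset contained in the open set {(p, ω) : pₗ > 0 for all l} (positivity of prices, where p ranges over the first L−1 coordinates together with p_L = 1 implicit). If E is, up to a rigid motion of ℝ^{2L-1}, a generalized helicoid M^n(a₁,…,a_k,b), then b·∏ᵢaᵢ = 0. -/
open Real

lemma LinearMap.apply_eq_zero_of_forall_pos_on_line {V : Type*} [AddCommGroup V] [Module ℝ V]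
    (φ : V →ₗ[ℝ] ℝ) (d : ℝ) (p w : V) (h : ∀ X : ℝ, 0 < φ (p + X • w) + d) : φ w = 0 := by
  by_contra hw
  have := h (-(φ p + d + 1) / φ w)
  rw [map_add, map_smul, smul_eq_mul, div_mul_cancel₀ _ hw] at this
  linarith

lemma exists_line_subset_generalizedHelicoid {n k : ℕ} {a : Fin k → ℝ} {b : ℝ} (hb : b ≠ 0)
    (ha : ∀ i, a i ≠ 0) (w : (Fin k ⊕ Fin k) ⊕ (Fin (n - 1 - k) ⊕ Unit)) :
    ∃ p, ∀ X : ℝ, p + X • EuclideanSpace.single w 1 ∈ generalizedHelicoid n k a b := by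
  rcases w with (i | i) | (j | ⟨⟩)
  · refine ⟨0, fun X => ⟨0, Pi.single i X, 0, ?_, ?_, ?_, ?_⟩⟩ <;>
      simp [Pi.single_apply]
  · have hs : a i * (π / (2 * a i)) = π / 2 := by field_simp [ha i]
    refine ⟨EuclideanSpace.single (Sum.inr (Sum.inr ())) (b * (π / (2 * a i))),
      fun X => ⟨π / (2 * a i), Pi.single i X, 0, fun i' => ?_, fun i' => ?_, by simp, by simp⟩⟩
    all_goals rcases eq_or_ne i' i with rfl | h <;> simp [*]
  · refine ⟨0, fun X => ⟨0, 0, Pi.single j X, ?_, ?_, ?_, ?_⟩⟩ <;>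
      simp [Pi.single_apply]
  · refine ⟨0, fun X => ⟨X / b, 0, 0, ?_, ?_, ?_, ?_⟩⟩ <;>
      simp [mul_div_cancel₀ _ hb]

lemma LinearMap.eq_zero_of_forall_mem_generalizedHelicoid_pos {n k : ℕ} {a : Fin k → ℝ} {b : ℝ}
    (hb : b ≠ 0) (ha : ∀ i, a i ≠ 0)
    (φ : EuclideanSpace ℝ ((Fin k ⊕ Fin k) ⊕ (Fin (n - 1 - k) ⊕ Unit)) →ₗ[ℝ] ℝ) (d : ℝ)
    (h : ∀ x ∈ generalizedHelicoid n k a b, 0 < φ x + d) : φ = 0 :=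
  (EuclideanSpace.basisFun _ ℝ).toBasis.ext fun w => by
    obtain ⟨p, hp⟩ := exists_line_subset_generalizedHelicoid hb ha w
    simpa using φ.apply_eq_zero_of_forall_pos_on_line d p _ fun X => h _ (hp X)

theorem price_positivity_forces_degenerate_helicoid_general (L n k : ℕ) (hL : 2 ≤ L)
    (a : Fin k → ℝ) (b : ℝ)
    (E : Set (EuclideanSpace ℝ (Fin (2 * L - 1))))
    (hpos : ∀ x ∈ E, ∀ l : Fin (2 * L - 1), (l : ℕ) < L - 1 → 0 < x l)
    (A : EuclideanSpace ℝ ((Fin k ⊕ Fin k) ⊕ (Fin (n - 1 - k) ⊕ Unit)) ≃ₗᵢ[ℝ]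
      EuclideanSpace ℝ (Fin (2 * L - 1)))
    (v : EuclideanSpace ℝ (Fin (2 * L - 1)))
    (hE : E = (fun x => A x + v) '' generalizedHelicoid n k a b) :
    b * ∏ i, a i = 0 := by
  by_contra hne
  obtain ⟨hb, ha⟩ : b ≠ 0 ∧ ∀ i, a i ≠ 0 := by simpa [Finset.prod_eq_zero_iff] using hne
  let l₀ : Fin (2 * L - 1) := ⟨0, by omega⟩
  let φ := (EuclideanSpace.proj l₀ : EuclideanSpace ℝ _ →L[ℝ] ℝ).toLinearMap ∘ₗ A.toLinearMap
  have hφ : φ = 0 := φ.eq_zero_of_forall_mem_generalizedHelicoid_pos hb ha (v l₀) fun x hx => by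
    have hmem : A x + v ∈ E := hE ▸ ⟨x, hx, rfl⟩
    exact hpos _ hmem l₀ (by simp [l₀]; omega)
  have hφ_one : φ (A.symm (EuclideanSpace.single l₀ 1)) = 1 := by simp [φ]
  simp [hφ] at hφ_one

/-- If `E ⊂ ℝ^{2L-1}` lies in the region where the first `L-1` coordinates
(prices) are positive, and `E` is, up to a rigid motion `x ↦ A x + v`, a
generalized helicoid `M^n(a₁,…,a_k,b)`, then `b · ∏ᵢ aᵢ = 0`. -/
theorem price_positivity_forces_degenerate_helicoid (L n k : ℕ) (hL : 2 ≤ L)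
    (hk : k ≤ n) (hdim : n + k = 2 * L - 1) (a : Fin k → ℝ) (b : ℝ)
    (E : Set (EuclideanSpace ℝ (Fin (2 * L - 1))))
    (hpos : ∀ x ∈ E, ∀ l : Fin (2 * L - 1), (l : ℕ) < L - 1 → 0 < x l)
    (A : EuclideanSpace ℝ ((Fin k ⊕ Fin k) ⊕ (Fin (n - 1 - k) ⊕ Unit)) ≃ₗᵢ[ℝ]
      EuclideanSpace ℝ (Fin (2 * L - 1)))
    (v : EuclideanSpace ℝ (Fin (2 * L - 1)))
    (hE : E = (fun x => A x + v) '' generalizedHelicoid n k a b) :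
    b * ∏ i, a i = 0 :=
  price_positivity_forces_degenerate_helicoid_general L n k hL a b E hpos A v hE
end
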